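/- arXiv:1610.02072 — 4 statements merged into one kernel-verified Lean document; each statement's English description precedes it below -/
import Mathlib

section
/- For all real a ≤ 1, exp(a) ≤ 1 + a + (e - 2)·a², where e is Euler's constant. -/
/-! Comparing the exponential series term by term (`y ^ 2 x ^ (n + 2) ≤ x ^ 2 y ^ (n + 2)` for
`0 ≤ x ≤ y`) shows that `(exp x - 1 - x) / x ^ 2` increases on `(0, ∞)`, so it is at most its
value `e - 2` at `1` when `0 ≤ a ≤ 1`. For `a ≤ 0` the function `1 + x + x ^ 2 / 2 - exp x` is
antitone (its derivative is `1 + x - exp x ≤ 0`) and vanishes at `0`, so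
`exp a ≤ 1 + a + a ^ 2 / 2`, and `1 / 2 ≤ e - 2`. -/

open Real Nat

lemma Real.hasSum_exp_sub_one_sub (x : ℝ) :
    HasSum (fun n : ℕ => x ^ (n + 2) / (n + 2)!) (exp x - 1 - x) := by
  have h := NormedSpace.expSeries_div_hasSum_exp x
  rw [← Real.exp_eq_exp_ℝ] at h
  have hhead : ∑ i ∈ Finset.range 2, x ^ i / i ! = 1 + x := by
    simp [Finset.sum_range_succ]
  simpa [hhead, sub_sub] using (hasSum_nat_add_iff' 2).mpr h

lemma Real.sq_mul_exp_sub_one_sub_le {x y : ℝ} (hx : 0 ≤ x) (hxy : x ≤ y) :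
    y ^ 2 * (exp x - 1 - x) ≤ x ^ 2 * (exp y - 1 - y) := by
  refine hasSum_le (fun n => ?_) ((hasSum_exp_sub_one_sub x).mul_left _)
    ((hasSum_exp_sub_one_sub y).mul_left _)
  have hpow : x ^ n ≤ y ^ n := pow_le_pow_left₀ hx hxy n
  have hterm : y ^ 2 * x ^ (n + 2) ≤ x ^ 2 * y ^ (n + 2) := by
    rw [pow_add, pow_add]
    nlinarith [mul_le_mul_of_nonneg_left hpow (mul_nonneg (sq_nonneg x) (sq_nonneg y))]
  simpa only [mul_div_assoc'] using div_le_div_of_nonneg_right hterm (by positivity)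

lemma Real.antitone_one_add_add_sq_div_two_sub_exp :
    Antitone fun x : ℝ => 1 + x + x ^ 2 / 2 - exp x := by
  refine antitone_of_deriv_nonpos (by fun_prop) fun x => ?_
  have hderiv : HasDerivAt (fun x : ℝ => 1 + x + x ^ 2 / 2 - exp x) (1 + x - exp x) x :=
    ((((hasDerivAt_id' x).const_add 1).add ((hasDerivAt_pow 2 x).div_const 2)).sub
      (hasDerivAt_exp x)).congr_deriv (by norm_num)
  rw [hderiv.deriv]
  linarith [add_one_le_exp x]

lemma Real.exp_le_one_add_add_sq_div_two_of_nonpos {x : ℝ} (hx : x ≤ 0) :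
    exp x ≤ 1 + x + x ^ 2 / 2 := by
  have := antitone_one_add_add_sq_div_two_sub_exp hx
  simp only [exp_zero] at this
  linarith

theorem exp_le_one_add_add_sq (a : ℝ) (ha : a ≤ 1) :
    Real.exp a ≤ 1 + a + (Real.exp 1 - 2) * a ^ 2 := by
  rcases le_total 0 a with ha₀ | ha₀
  · have h := sq_mul_exp_sub_one_sub_le ha₀ ha
    simp only [one_pow, one_mul] at h
    linarith
  · have half_le : 1 / 2 ≤ exp 1 - 2 := by linarith [exp_one_gt_d9]
    nlinarith [exp_le_one_add_add_sq_div_two_of_nonpos ha₀, sq_nonneg a]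
end

section
/- Let a, x₁, y ∈ ℝⁿ with a_i + x_{1,i} ≥ α > 0 for all i, and suppose ‖y - x₁‖₂ ≤ 2B. Then the Kullback–Leibler divergence D(a + y, a + x₁) := ∑_i (a_i + y_i) ln((a_i + y_i)/(a_i + x_{1,i})) − ∑_i (a_i + y_i) + ∑_i (a_i + x_{1,i}) satisfies D(a + y, a + x₁) ≤ ‖y − x₁‖₂²/α ≤ 4B²/α, provided a_i + y_i ≥ 0 for all i. -/
/-!
Termwise, `ln t ≤ t - 1` at `t = u / v` gives `u ln (u / v) - u + v ≤ (u - v)² / v`, and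
`v ≥ α` turns the right-hand side into `(u - v)² / α`. Summing over the coordinates of
`u = a + y`, `v = a + x₁` yields `‖y - x₁‖² / α`, which is at most `4B² / α`.
-/

open Finset Real

noncomputable def genKLDiv {ι : Type*} [Fintype ι] (u v : ι → ℝ) : ℝ :=
  ∑ i, u i * log (u i / v i) - ∑ i, u i + ∑ i, v i

lemma mul_log_div_sub_add_le_sq_div {u v : ℝ} (hu : 0 ≤ u) (hv : 0 < v) :
    u * log (u / v) - u + v ≤ (u - v) ^ 2 / v := by
  rcases hu.eq_or_lt with rfl | hu
  · simp [sq, hv.ne']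
  have hlog : u * log (u / v) ≤ u * (u / v - 1) :=
    mul_le_mul_of_nonneg_left (log_le_sub_one_of_pos (div_pos hu hv)) hu.le
  calc u * log (u / v) - u + v ≤ u * (u / v - 1) - u + v := by linarith
    _ = (u - v) ^ 2 / v := by field_simp; ring

lemma genKLDiv_le_sum_sq_div {ι : Type*} [Fintype ι] {u v : ι → ℝ} {α : ℝ} (hα : 0 < α)
    (hu : ∀ i, 0 ≤ u i) (hv : ∀ i, α ≤ v i) :
    genKLDiv u v ≤ (∑ i, (u i - v i) ^ 2) / α := by
  have hterm (i : ι) : u i * log (u i / v i) - u i + v i ≤ (u i - v i) ^ 2 / α :=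
    (mul_log_div_sub_add_le_sq_div (hu i) (hα.trans_le (hv i))).trans
      (div_le_div_of_nonneg_left (sq_nonneg _) hα (hv i))
  calc genKLDiv u v = ∑ i, (u i * log (u i / v i) - u i + v i) := by
        simp only [genKLDiv, sum_add_distrib, sum_sub_distrib]
    _ ≤ ∑ i, (u i - v i) ^ 2 / α := sum_le_sum fun i _ => hterm i
    _ = (∑ i, (u i - v i) ^ 2) / α := (sum_div ..).symm

theorem kl_div_le_norm_sq_div_general (n : ℕ) (a x₁ y : EuclideanSpace ℝ (Fin n))
    (α B : ℝ) (hα : 0 < α)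
    (hax : ∀ i, α ≤ a i + x₁ i) (hay : ∀ i, 0 ≤ a i + y i)
    (hnorm : ‖y - x₁‖ ≤ 2 * B) :
    (∑ i, (a i + y i) * Real.log ((a i + y i) / (a i + x₁ i))
      - ∑ i, (a i + y i) + ∑ i, (a i + x₁ i) ≤ ‖y - x₁‖ ^ 2 / α)
    ∧ ‖y - x₁‖ ^ 2 / α ≤ 4 * B ^ 2 / α := by
  have hnorm_sq : ‖y - x₁‖ ^ 2 = ∑ i, ((a i + y i) - (a i + x₁ i)) ^ 2 := by
    simp [EuclideanSpace.real_norm_sq_eq]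
  refine ⟨?_, ?_⟩
  · rw [hnorm_sq]
    exact genKLDiv_le_sum_sq_div hα hay hax
  · have : ‖y - x₁‖ ^ 2 ≤ (2 * B) ^ 2 := pow_le_pow_left₀ (norm_nonneg _) hnorm 2
    gcongr
    linarith

theorem kl_div_le_norm_sq_div (n : ℕ) (a x₁ y : EuclideanSpace ℝ (Fin n))
    (α B : ℝ) (hα : 0 < α) (hB : 0 < B)
    (hax : ∀ i, α ≤ a i + x₁ i) (hay : ∀ i, 0 ≤ a i + y i)
    (hnorm : ‖y - x₁‖ ≤ 2 * B) :
    (∑ i, (a i + y i) * Real.log ((a i + y i) / (a i + x₁ i))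
      - ∑ i, (a i + y i) + ∑ i, (a i + x₁ i) ≤ ‖y - x₁‖ ^ 2 / α)
    ∧ ‖y - x₁‖ ^ 2 / α ≤ 4 * B ^ 2 / α :=
  kl_div_le_norm_sq_div_general n a x₁ y α B hα hax hay hnorm
end

section
/- Let v₁, ..., vₙ ∈ ℝⁿ be a C-approximate barycentric spanner of a polytope P ⊆ ℝⁿ (i.e., every x ∈ P can be written x = ∑_i λ_{x,i} v_i with |λ_{x,i}| ≤ C). Then for any probability distribution μ supported on P, the covariance matrices satisfy E_{x∼μ}[x xᵀ] ⪯ C² n² · (1/n) ∑_{i=1}^{n} v_i v_iᵀ. Consequently, the minimal eigenvalue of (1/n) ∑_i v_i v_iᵀ is at least λ_min(E_{x∼μ}[x xᵀ]) / (C² n²). -/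
/-!
Write each `x ∈ P` as `x = ∑ λᵢ vᵢ` with `|λᵢ| ≤ C`. By Cauchy–Schwarz, for every direction `u`,
`⟪x, u⟫² ≤ (∑ λᵢ²) ∑ ⟪vᵢ, u⟫² ≤ C² n ∑ ⟪vᵢ, u⟫²`; averaging over `μ` compares the quadratic forms
of the two second-moment matrices, which is the Loewner bound. Adding `c • 1 ⪯ E[x xᵀ]` to it
and dividing by `C² n²` gives the eigenvalue bound.
-/

open Matrix

section

variable {m ι : Type*} [Fintype m]

lemma dotProduct_vecMulVec_self_mulVec (a u : m → ℝ) :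
    u ⬝ᵥ vecMulVec a a *ᵥ u = (a ⬝ᵥ u) ^ 2 := by
  rw [vecMulVec_mulVec, op_smul_eq_smul, dotProduct_smul, smul_eq_mul, dotProduct_comm, sq]

lemma posSemidef_sum_smul_vecMulVec_self (s : Finset ι) {w : ι → ℝ} (hw : ∀ i ∈ s, 0 ≤ w i)
    (x : ι → m → ℝ) : (∑ i ∈ s, w i • vecMulVec (x i) (x i)).PosSemidef :=
  posSemidef_sum s fun i hi => (posSemidef_vecMulVec_self_star (x i)).smul (hw i hi)

lemma posSemidef_sub_of_forall_dotProduct_mulVec_le {A B : Matrix m m ℝ}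
    (hA : A.IsHermitian) (hB : B.IsHermitian) (h : ∀ u, u ⬝ᵥ A *ᵥ u ≤ u ⬝ᵥ B *ᵥ u) :
    (B - A).PosSemidef :=
  .of_dotProduct_mulVec_nonneg (hB.sub hA) fun u => by
    rw [star_trivial, sub_mulVec, dotProduct_sub, sub_nonneg]
    exact h u

variable [Fintype ι]

lemma sq_dotProduct_le_of_abs_coeff_le {C : ℝ} (v : ι → m → ℝ) {lam : ι → ℝ}
    (hlam : ∀ i, |lam i| ≤ C) (u : m → ℝ) :
    ((∑ i, lam i • v i) ⬝ᵥ u) ^ 2 ≤ C ^ 2 * Fintype.card ι * ∑ i, (v i ⬝ᵥ u) ^ 2 := by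
  have hlam_sq : ∑ i, lam i ^ 2 ≤ C ^ 2 * Fintype.card ι := by
    calc ∑ i, lam i ^ 2 ≤ ∑ _i : ι, C ^ 2 :=
          Finset.sum_le_sum fun i _ => sq_le_sq' (abs_le.mp (hlam i)).1 (abs_le.mp (hlam i)).2
      _ = C ^ 2 * Fintype.card ι := by simp [mul_comm]
  calc ((∑ i, lam i • v i) ⬝ᵥ u) ^ 2 = (∑ i, lam i * (v i ⬝ᵥ u)) ^ 2 := by
        simp only [sum_dotProduct, smul_dotProduct, smul_eq_mul]
    _ ≤ (∑ i, lam i ^ 2) * ∑ i, (v i ⬝ᵥ u) ^ 2 := Finset.sum_mul_sq_le_sq_mul_sq _ _ _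
    _ ≤ C ^ 2 * Fintype.card ι * ∑ i, (v i ⬝ᵥ u) ^ 2 :=
        mul_le_mul_of_nonneg_right hlam_sq (Finset.sum_nonneg fun i _ => sq_nonneg _)

theorem posSemidef_smul_sum_vecMulVec_sub_sum_smul_vecMulVec {C : ℝ} (v : ι → m → ℝ)
    {A : Finset (m → ℝ)}
    (hA : ∀ x ∈ A, ∃ lam : ι → ℝ, (∀ i, |lam i| ≤ C) ∧ x = ∑ i, lam i • v i)
    {μ : (m → ℝ) → ℝ} (hμ0 : ∀ x ∈ A, 0 ≤ μ x) (hμ1 : ∑ x ∈ A, μ x = 1) :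
    ((C ^ 2 * Fintype.card ι) • ∑ i, vecMulVec (v i) (v i)
      - ∑ x ∈ A, μ x • vecMulVec x x).PosSemidef := by
  have hS := posSemidef_sum Finset.univ fun i _ => posSemidef_vecMulVec_self_star (v i)
  refine posSemidef_sub_of_forall_dotProduct_mulVec_le
    (posSemidef_sum_smul_vecMulVec_self A hμ0 _).isHermitian
    (hS.smul (by positivity)).isHermitian fun u => ?_
  simp only [smul_mulVec, sum_mulVec, dotProduct_sum, dotProduct_smul, smul_eq_mul,
    dotProduct_vecMulVec_self_mulVec]
  calc ∑ x ∈ A, μ x * (x ⬝ᵥ u) ^ 2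
      ≤ ∑ x ∈ A, μ x * (C ^ 2 * Fintype.card ι * ∑ i, (v i ⬝ᵥ u) ^ 2) :=
        Finset.sum_le_sum fun x hx => by
          obtain ⟨lam, hlam, rfl⟩ := hA x hx
          exact mul_le_mul_of_nonneg_left (sq_dotProduct_le_of_abs_coeff_le v hlam u) (hμ0 _ hx)
    _ = C ^ 2 * Fintype.card ι * ∑ i, (v i ⬝ᵥ u) ^ 2 := by rw [← Finset.sum_mul, hμ1, one_mul]

end

lemma Matrix.PosSemidef.sub_div_smul_one {m : Type*} [Fintype m] [DecidableEq m]
    {S M : Matrix m m ℝ} {k c : ℝ} (hk : 0 < k)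
    (hSM : (k • S - M).PosSemidef) (hM : (M - c • 1).PosSemidef) :
    (S - (c / k) • 1).PosSemidef := by
  have h := (hSM.add hM).smul (inv_nonneg.mpr hk.le)
  rwa [sub_add_sub_cancel, smul_sub, smul_smul, smul_smul, inv_mul_cancel₀ hk.ne', one_smul,
    ← div_eq_inv_mul] at h

theorem barycentric_spanner_fitness_general (n : ℕ) (hn : 0 < n) (C : ℝ) (hC : 1 < C)
    (P : Set (Fin n → ℝ)) (v : Fin n → (Fin n → ℝ))
    (hspanner : ∀ x ∈ P, ∃ lam : Fin n → ℝ, (∀ i, |lam i| ≤ C) ∧ x = ∑ i, lam i • v i)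
    (A : Finset (Fin n → ℝ)) (hA : ↑A ⊆ P)
    (μ : (Fin n → ℝ) → ℝ) (hμ0 : ∀ x ∈ A, 0 ≤ μ x) (hμ1 : ∑ x ∈ A, μ x = 1) :
    ((C ^ 2 * n ^ 2) • ((n : ℝ)⁻¹ • ∑ i, Matrix.vecMulVec (v i) (v i))
        - ∑ x ∈ A, μ x • Matrix.vecMulVec x x).PosSemidef
    ∧ ∀ c : ℝ,
        ((∑ x ∈ A, μ x • Matrix.vecMulVec x x)
            - c • (1 : Matrix (Fin n) (Fin n) ℝ)).PosSemidef →
        (((n : ℝ)⁻¹ • ∑ i, Matrix.vecMulVec (v i) (v i))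
            - (c / (C ^ 2 * n ^ 2)) • (1 : Matrix (Fin n) (Fin n) ℝ)).PosSemidef := by
  have hloewner := posSemidef_smul_sum_vecMulVec_sub_sum_smul_vecMulVec v
    (fun x hx => hspanner x (hA hx)) hμ0 hμ1
  have hscale : (C ^ 2 * n ^ 2) * (n : ℝ)⁻¹ = C ^ 2 * Fintype.card (Fin n) := by
    rw [Fintype.card_fin]
    field_simp
  have hfirst : ((C ^ 2 * n ^ 2) • ((n : ℝ)⁻¹ • ∑ i, Matrix.vecMulVec (v i) (v i))
      - ∑ x ∈ A, μ x • Matrix.vecMulVec x x).PosSemidef := by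
    rwa [smul_smul, hscale]
  have hk : (0 : ℝ) < C ^ 2 * n ^ 2 := by
    have : (0 : ℝ) < n := by exact_mod_cast hn
    positivity
  exact ⟨hfirst, fun c hc => hfirst.sub_div_smul_one hk hc⟩

/-- Fitness of barycentric spanners: the covariance of any distribution over the
polytope is dominated (in the Loewner order) by `C² n²` times the covariance of the
uniform distribution on a `C`-approximate barycentric spanner; consequently the minimal
eigenvalue of the spanner covariance is at least `λ_min / (C² n²)`, expressed via
`M ⪰ c • 1 ↔ λ_min(M) ≥ c`. -/
theorem barycentric_spanner_fitness (n : ℕ) (hn : 0 < n) (C : ℝ) (hC : 1 < C)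
    (P : Set (Fin n → ℝ)) (v : Fin n → (Fin n → ℝ)) (hvP : ∀ i, v i ∈ P)
    (hspanner : ∀ x ∈ P, ∃ lam : Fin n → ℝ, (∀ i, |lam i| ≤ C) ∧ x = ∑ i, lam i • v i)
    (A : Finset (Fin n → ℝ)) (hA : ↑A ⊆ P)
    (μ : (Fin n → ℝ) → ℝ) (hμ0 : ∀ x ∈ A, 0 ≤ μ x) (hμ1 : ∑ x ∈ A, μ x = 1) :
    ((C ^ 2 * n ^ 2) • ((n : ℝ)⁻¹ • ∑ i, Matrix.vecMulVec (v i) (v i))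
        - ∑ x ∈ A, μ x • Matrix.vecMulVec x x).PosSemidef
    ∧ ∀ c : ℝ,
        ((∑ x ∈ A, μ x • Matrix.vecMulVec x x)
            - c • (1 : Matrix (Fin n) (Fin n) ℝ)).PosSemidef →
        (((n : ℝ)⁻¹ • ∑ i, Matrix.vecMulVec (v i) (v i))
            - (c / (C ^ 2 * n ^ 2)) • (1 : Matrix (Fin n) (Fin n) ℝ)).PosSemidef :=
  barycentric_spanner_fitness_general n hn C hC P v hspanner A hA μ hμ0 hμ1
end

section
/- Let P ⊆ [α, β]ⁿ with 0 < α ≤ β be a convex set of ℓ₂-diameter at most B, let x ∈ ℝⁿ_{>0}, and let x* = argmin_{z∈P} D(z, x) be the KL (Bregman) projection of x onto P. Then for every z ∈ P and every y ∈ P: D(z, y) − D(z, x) ≤ (B/α)·‖x* − y‖₂ + D(z, x*) − D(z, x) ≤ (B/α)·‖x* − y‖₂, where the last step uses the Pythagorean inequality D(z, x*) ≤ D(z, x). -/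
noncomputable def KL {n : ℕ} (u v : EuclideanSpace ℝ (Fin n)) : ℝ :=
  ∑ i, u i * Real.log (u i / v i) - ∑ i, u i + ∑ i, v i

/-! The first inequality is a three-point estimate: `KL z y - KL z x*` equals
`∑ zᵢ log (x*ᵢ / yᵢ) - x*ᵢ + yᵢ`, which `log t ≤ t - 1` bounds by `∑ (zᵢ - yᵢ)(x*ᵢ - yᵢ) / yᵢ`;
Cauchy–Schwarz with `yᵢ ≥ α` and `‖z - y‖ ≤ B` finishes. The second is the Pythagorean
inequality `KL z x* + KL x* x ≤ KL z x`: its defect `∑ (zᵢ - x*ᵢ) log (x*ᵢ / xᵢ)` is the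
derivative of `KL · x` at its minimiser `x*` on the convex set `P` in the direction `z - x*`,
hence nonnegative. -/

open Real Finset

lemma sum_abs_mul_abs_le_norm_mul_norm {ι : Type*} [Fintype ι] (u v : EuclideanSpace ℝ ι) :
    ∑ i, |u i| * |v i| ≤ ‖u‖ * ‖v‖ := by
  simpa only [EuclideanSpace.norm_eq, Real.norm_eq_abs, sq_abs] using
    Real.sum_mul_le_sqrt_mul_sqrt univ (fun i ↦ |u i|) (fun i ↦ |v i|)

lemma mul_log_div_sub_add_le {a b c : ℝ} (ha : 0 ≤ a) (hb : 0 < b) (hc : 0 < c) :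
    a * log (c / b) - c + b ≤ (a - b) * (c - b) / b := by
  have hlog : a * log (c / b) ≤ a * (c / b - 1) :=
    mul_le_mul_of_nonneg_left (log_le_sub_one_of_pos (by positivity)) ha
  have hid : a * (c / b - 1) - c + b = (a - b) * (c - b) / b := by
    field_simp
    ring
  linarith

lemma hasDerivAt_mul_log_div_sub_add {s c : ℝ} (hs : s ≠ 0) (hc : c ≠ 0) :
    HasDerivAt (fun t ↦ t * log (t / c) - t + c) (log (s / c)) s := by
  have hlog : HasDerivAt (fun t ↦ log (t / c)) (1 / c / (s / c)) s :=
    ((hasDerivAt_id' s).div_const c).log (div_ne_zero hs hc)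
  refine ((((hasDerivAt_id' s).fun_mul hlog).fun_sub (hasDerivAt_id' s)).add_const c).congr_deriv ?_
  field_simp
  ring

namespace KL

variable {n : ℕ}

lemma eq_sum (u v : EuclideanSpace ℝ (Fin n)) :
    KL u v = ∑ i, (u i * log (u i / v i) - u i + v i) := by
  rw [KL, sum_add_distrib, sum_sub_distrib]

lemma nonneg {u v : EuclideanSpace ℝ (Fin n)} (hu : ∀ i, 0 ≤ u i) (hv : ∀ i, 0 < v i) :
    0 ≤ KL u v := by
  rw [eq_sum]
  refine sum_nonneg fun i _ ↦ ?_
  have hvi := hv i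
  -- `u log (u / v) - u + v = v · klFun (u / v)`
  have h := mul_nonneg hvi.le (InformationTheory.klFun_nonneg (div_nonneg (hu i) hvi.le))
  rw [InformationTheory.klFun] at h
  convert h using 1
  field_simp
  ring

lemma sub_eq_sum {u v w : EuclideanSpace ℝ (Fin n)} (hv : ∀ i, v i ≠ 0) (hw : ∀ i, w i ≠ 0) :
    KL u v - KL u w = ∑ i, (u i * log (w i / v i) - w i + v i) := by
  rw [eq_sum, eq_sum, ← sum_sub_distrib]
  refine sum_congr rfl fun i _ ↦ ?_
  rcases eq_or_ne (u i) 0 with hu | hu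
  · simp only [hu, zero_mul, zero_sub]
    ring
  · rw [log_div hu (hv i), log_div hu (hw i), log_div (hw i) (hv i)]
    ring

lemma sub_le_norm_mul_norm_div {α : ℝ} (hα : 0 < α) {u v w : EuclideanSpace ℝ (Fin n)}
    (hu : ∀ i, 0 ≤ u i) (hv : ∀ i, α ≤ v i) (hw : ∀ i, 0 < w i) :
    KL u v - KL u w ≤ ‖u - v‖ * ‖w - v‖ / α := by
  have hvpos : ∀ i, 0 < v i := fun i ↦ hα.trans_le (hv i)
  rw [sub_eq_sum (fun i ↦ (hvpos i).ne') (fun i ↦ (hw i).ne')]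
  calc ∑ i, (u i * log (w i / v i) - w i + v i)
      ≤ ∑ i, |u i - v i| * |w i - v i| / α := by
        refine sum_le_sum fun i _ ↦ ?_
        calc u i * log (w i / v i) - w i + v i
            ≤ (u i - v i) * (w i - v i) / v i := mul_log_div_sub_add_le (hu i) (hvpos i) (hw i)
          _ ≤ |u i - v i| * |w i - v i| / v i :=
              div_le_div_of_nonneg_right (by rw [← abs_mul]; exact le_abs_self _) (hvpos i).le
          _ ≤ |u i - v i| * |w i - v i| / α := by gcongr; exact hv i
    _ = (∑ i, |(u - v) i| * |(w - v) i|) / α := by simp only [sum_div, PiLp.sub_apply]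
    _ ≤ ‖u - v‖ * ‖w - v‖ / α := by gcongr; exact sum_abs_mul_abs_le_norm_mul_norm _ _

lemma hasFDerivAt_left {u v : EuclideanSpace ℝ (Fin n)} (hu : ∀ i, u i ≠ 0)
    (hv : ∀ i, v i ≠ 0) :
    HasFDerivAt (fun w ↦ KL w v) (∑ i, log (u i / v i) • EuclideanSpace.proj (𝕜 := ℝ) i) u := by
  simp_rw [eq_sum]
  refine HasFDerivAt.fun_sum fun i _ ↦ ?_
  exact (hasDerivAt_mul_log_div_sub_add (hu i) (hv i)).comp_hasFDerivAt u
    (EuclideanSpace.proj (𝕜 := ℝ) i).hasFDerivAt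

theorem add_le_of_isMinOn {P : Set (EuclideanSpace ℝ (Fin n))} (hP : Convex ℝ P)
    {x xstar z : EuclideanSpace ℝ (Fin n)} (hx : ∀ i, 0 < x i) (hxstarpos : ∀ i, 0 < xstar i)
    (hxstarP : xstar ∈ P) (hmin : IsMinOn (fun w ↦ KL w x) P xstar) (hz : z ∈ P) :
    KL z xstar + KL xstar x ≤ KL z x := by
  have hx0 : ∀ i, x i ≠ 0 := fun i ↦ (hx i).ne'
  have hxstar0 : ∀ i, xstar i ≠ 0 := fun i ↦ (hxstarpos i).ne'
  have hfirst_order : 0 ≤ ∑ i, log (xstar i / x i) * (z i - xstar i) := by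
    simpa using hmin.localize.hasFDerivWithinAt_nonneg
      (hasFDerivAt_left hxstar0 hx0).hasFDerivWithinAt
      (sub_mem_posTangentConeAt_of_segment_subset (hP.segment_subset hxstarP hz))
  have hthree_point : KL z x - KL z xstar - KL xstar x
      = ∑ i, log (xstar i / x i) * (z i - xstar i) := by
    rw [sub_eq_sum hx0 hxstar0, eq_sum, ← sum_sub_distrib]
    exact sum_congr rfl fun i _ ↦ by ring
  linarith

end KL

theorem bregman_projection_error_bound_general (n : ℕ) (α β B : ℝ) (hα : 0 < α)
    (P : Set (EuclideanSpace ℝ (Fin n))) (hPconv : Convex ℝ P)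
    (hPbox : ∀ z ∈ P, ∀ i, z i ∈ Set.Icc α β)
    (hPdiam : ∀ u ∈ P, ∀ v ∈ P, ‖u - v‖ ≤ B)
    (x : EuclideanSpace ℝ (Fin n)) (hx : ∀ i, 0 < x i)
    (xstar : EuclideanSpace ℝ (Fin n)) (hxstarP : xstar ∈ P)
    (hxstar : ∀ z ∈ P, KL xstar x ≤ KL z x) :
    ∀ z ∈ P, ∀ y ∈ P,
      KL z y - KL z x ≤ (B / α) * ‖xstar - y‖ + KL z xstar - KL z x
      ∧ (B / α) * ‖xstar - y‖ + KL z xstar - KL z x ≤ (B / α) * ‖xstar - y‖ := by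
  intro z hz y hy
  have hpos : ∀ w ∈ P, ∀ i, 0 < w i := fun w hw i ↦ hα.trans_le (hPbox w hw i).1
  constructor
  · have hKL := KL.sub_le_norm_mul_norm_div hα (fun i ↦ (hpos z hz i).le)
      (fun i ↦ (hPbox y hy i).1) (hpos xstar hxstarP)
    have hdiam : ‖z - y‖ * ‖xstar - y‖ / α ≤ B / α * ‖xstar - y‖ := by
      rw [div_mul_eq_mul_div]
      gcongr
      exact hPdiam z hz y hy
    linarith
  · have hpyth := KL.add_le_of_isMinOn hPconv hx (hpos xstar hxstarP) hxstarP hxstar hz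
    have hnonneg := KL.nonneg (fun i ↦ (hpos xstar hxstarP i).le) hx
    linarith

theorem bregman_projection_error_bound (n : ℕ) (α β B : ℝ) (hα : 0 < α) (hαβ : α ≤ β)
    (hB : 0 < B) (P : Set (EuclideanSpace ℝ (Fin n))) (hPconv : Convex ℝ P)
    (hPbox : ∀ z ∈ P, ∀ i, z i ∈ Set.Icc α β)
    (hPdiam : ∀ u ∈ P, ∀ v ∈ P, ‖u - v‖ ≤ B)
    (x : EuclideanSpace ℝ (Fin n)) (hx : ∀ i, 0 < x i)
    (xstar : EuclideanSpace ℝ (Fin n)) (hxstarP : xstar ∈ P)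
    (hxstar : ∀ z ∈ P, KL xstar x ≤ KL z x) :
    ∀ z ∈ P, ∀ y ∈ P,
      KL z y - KL z x ≤ (B / α) * ‖xstar - y‖ + KL z xstar - KL z x
      ∧ (B / α) * ‖xstar - y‖ + KL z xstar - KL z x ≤ (B / α) * ‖xstar - y‖ :=
  bregman_projection_error_bound_general n α β B hα P hPconv hPbox hPdiam x hx xstar hxstarP hxstar
end
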